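/- Let m, n be coprime positive integers, γ an (m,n)-Dyck path, and γ* the associated rugged (m+n,n)-Dyck path obtained by inserting a horizontal step after each vertical step. Then area(γ) = area(γ*), where area denotes the number of complete unit lattice squares between the path and the corresponding diagonal (y=(n/m)x for γ, and y=(n/(m+n))x for γ*). -/

import Mathlib

/-!
Row `y` of `γ*` is row `y` of `γ` shifted right by `y`: each of the `y` vertical steps below it
has acquired a horizontal step. Since `n (x + 1) ≤ m y ↔ n (x + y + 1) ≤ (m + n) y`, the
shear `(x, y) ↦ (x + y, y)` maps the squares counted by `area γ` bijectively onto those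
counted by `area γ*`.
-/

open scoped Classical
open Finset

/-- A lattice path is encoded as a list of steps: `false` = horizontal step `(1,0)`,
`true` = vertical step `(0,1)`.  `IsDyck m n w` says `w` is an `(m,n)`-Dyck path:
it has `m` horizontal and `n` vertical steps and every intermediate lattice point
`(x,y)` satisfies `n*x ≤ m*y` (the path stays weakly above the diagonal `y=(n/m)x`). -/
def IsDyck (m n : ℕ) (w : List Bool) : Prop :=
  w.count false = m ∧ w.count true = n ∧
    ∀ p ∈ w.inits, n * p.count false ≤ m * p.count true

/-- `x`-coordinate of the point of the path reached after the first `i` steps. -/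
def ptX (w : List Bool) (i : ℕ) : ℤ := ((w.take i).count false : ℤ)

/-- `y`-coordinate of the point of the path reached after the first `i` steps. -/
def ptY (w : List Bool) (i : ℕ) : ℤ := ((w.take i).count true : ℤ)

/-- `O(γ)`: pairs `(i,j)` of a horizontal step `i` and a vertical step `j`
appearing later in the path. -/
def Opairs (w : List Bool) : Finset (ℕ × ℕ) :=
  (Finset.range w.length ×ˢ Finset.range w.length).filter
    (fun ij => ij.1 < ij.2 ∧ w[ij.1]? = some false ∧ w[ij.2]? = some true)

/-- The set of (bottom-left corners of) complete unit lattice squares lying between the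
path and the diagonal `y = (n/m)x`: the square `[x,x+1]×[y,y+1]` lies weakly above the
diagonal and strictly below the path. -/
noncomputable def areaSet (m n : ℕ) (w : List Bool) : Finset (ℕ × ℕ) :=
  ((Finset.range m) ×ˢ (Finset.range n)).filter (fun xy =>
    n * (xy.1 + 1) ≤ m * xy.2 ∧
    ∃ i < w.length, w[i]? = some false ∧
      (w.take (i+1)).count false = xy.1 + 1 ∧ xy.2 + 1 ≤ (w.take (i+1)).count true)

/-- `area(γ)`: the number of complete unit lattice squares between the path and the
diagonal. -/
noncomputable def area (m n : ℕ) (w : List Bool) : ℕ := (areaSet m n w).card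

/-- Some line of slope `n/m` (i.e. `{(x,y) | n*x - m*y = c}`) meets both the closed
horizontal step segment `i` and the closed vertical step segment `j`. -/
def MeetsBoth (m n : ℕ) (w : List Bool) (i j : ℕ) : Prop :=
  ∃ c : ℝ,
    (∃ x : ℝ, (ptX w i : ℝ) ≤ x ∧ x ≤ (ptX w i : ℝ) + 1 ∧
      (n : ℝ) * x - (m : ℝ) * (ptY w i : ℝ) = c) ∧
    (∃ y : ℝ, (ptY w j : ℝ) ≤ y ∧ y ≤ (ptY w j : ℝ) + 1 ∧
      (n : ℝ) * (ptX w j : ℝ) - (m : ℝ) * y = c)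

/-- Condition (1A): the line of slope `n/m` through the left endpoint `(a-1,b)` of the
horizontal step `i` meets the closed vertical step segment `j`. -/
def Cond1A (m n : ℕ) (w : List Bool) (i j : ℕ) : Prop :=
  ∃ y : ℝ, (ptY w j : ℝ) ≤ y ∧ y ≤ (ptY w j : ℝ) + 1 ∧
    (n : ℝ) * ((ptX w j : ℝ) - (ptX w i : ℝ)) = (m : ℝ) * (y - (ptY w i : ℝ))

/-- Condition (2A): the line of slope `n/m` through the top endpoint `(a',b'+1)` of the
vertical step `j` meets the closed horizontal step segment `i`. -/
def Cond2A (m n : ℕ) (w : List Bool) (i j : ℕ) : Prop :=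
  ∃ x : ℝ, (ptX w i : ℝ) ≤ x ∧ x ≤ (ptX w i : ℝ) + 1 ∧
    (n : ℝ) * (x - (ptX w j : ℝ)) = (m : ℝ) * ((ptY w i : ℝ) - ((ptY w j : ℝ) + 1))

/-- `H(γ)`: pairs in `O(γ)` admitting a common transversal line parallel to the
diagonal. -/
noncomputable def Hpairs (m n : ℕ) (w : List Bool) : Finset (ℕ × ℕ) :=
  (Opairs w).filter (fun ij => MeetsBoth m n w ij.1 ij.2)

/-- `H₁(γ)`: pairs in `O(γ)` satisfying condition (1A). -/
noncomputable def H1pairs (m n : ℕ) (w : List Bool) : Finset (ℕ × ℕ) :=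
  (Opairs w).filter (fun ij => Cond1A m n w ij.1 ij.2)

/-- `H₂(γ)`: pairs in `O(γ)` satisfying condition (2A). -/
noncomputable def H2pairs (m n : ℕ) (w : List Bool) : Finset (ℕ × ℕ) :=
  (Opairs w).filter (fun ij => Cond2A m n w ij.1 ij.2)

/-- The line of slope `n/m` through the point `(px,py)` meets the closed segment of the
horizontal step `i`. -/
def lineHitsH (m n : ℕ) (w : List Bool) (px py : ℤ) (i : ℕ) : Prop :=
  w[i]? = some false ∧
    ∃ x : ℝ, (ptX w i : ℝ) ≤ x ∧ x ≤ (ptX w i : ℝ) + 1 ∧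
      (n : ℝ) * (x - (px : ℝ)) = (m : ℝ) * ((ptY w i : ℝ) - (py : ℝ))

/-- The line of slope `n/m` through the point `(px,py)` meets the closed segment of the
vertical step `j`. -/
def lineHitsV (m n : ℕ) (w : List Bool) (px py : ℤ) (j : ℕ) : Prop :=
  w[j]? = some true ∧
    ∃ y : ℝ, (ptY w j : ℝ) ≤ y ∧ y ≤ (ptY w j : ℝ) + 1 ∧
      (n : ℝ) * ((ptX w j : ℝ) - (px : ℝ)) = (m : ℝ) * (y - (py : ℝ))

/-- Outer vertices of the path, encoded by the index `j` of a vertical step that is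
immediately followed by a horizontal step; the vertex itself is the point
`(ptX w (j+1), ptY w (j+1))`. -/
def outerIdx (w : List Bool) : Finset ℕ :=
  (Finset.range w.length).filter
    (fun j => w[j]? = some true ∧ w[j+1]? = some false)

/-- The perpendicular distance from the diagonal of the outer vertex indexed by `j`,
measured by `m*y - n*x` (proportional to the true distance). -/
def diagDist (m n : ℕ) (w : List Bool) (j : ℕ) : ℤ :=
  (m : ℤ) * ptY w (j+1) - (n : ℤ) * ptX w (j+1)

/-- `V(γ)`: outer vertices other than one farthest from the diagonal. -/
def Vset (m n : ℕ) (w : List Bool) : Finset ℕ :=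
  (outerIdx w).filter (fun j => ∃ j' ∈ outerIdx w, diagDist m n w j < diagDist m n w j')

/-- `k(p)`: the number of horizontal steps of the path, other than the horizontal step
starting at the outer vertex `p` (indexed by `j`), met by the line of slope `n/m`
through `p`. -/
noncomputable def kH (m n : ℕ) (w : List Bool) (j : ℕ) : ℕ :=
  ((Finset.range w.length).filter
    (fun i => i ≠ j + 1 ∧ lineHitsH m n w (ptX w (j+1)) (ptY w (j+1)) i)).card

/-- The number of vertical steps of the path, other than the vertical step ending at the
outer vertex `p` (indexed by `j`), met by the line of slope `n/m` through `p`. -/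
noncomputable def kV (m n : ℕ) (w : List Bool) (j : ℕ) : ℕ :=
  ((Finset.range w.length).filter
    (fun i => i ≠ j ∧ lineHitsV m n w (ptX w (j+1)) (ptY w (j+1)) i)).card

/-- `k₁(p)`: the number of vertical steps occurring after the outer vertex `p`
(indexed by `j`) met by the line of slope `n/m` through `p`. -/
noncomputable def k1 (m n : ℕ) (w : List Bool) (j : ℕ) : ℕ :=
  ((Finset.range w.length).filter
    (fun i => j < i ∧ lineHitsV m n w (ptX w (j+1)) (ptY w (j+1)) i)).card

/-- `k₂(p)`: the number of horizontal steps occurring before the outer vertex `p`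
(indexed by `j`) met by the line of slope `n/m` through `p`. -/
noncomputable def k2 (m n : ℕ) (w : List Bool) (j : ℕ) : ℕ :=
  ((Finset.range w.length).filter
    (fun i => i ≤ j ∧ lineHitsH m n w (ptX w (j+1)) (ptY w (j+1)) i)).card

/-- The insertion map `γ ↦ γ*`: insert one horizontal step immediately after each
vertical step. -/
def star : List Bool → List Bool
  | [] => []
  | true :: w => true :: false :: star w
  | false :: w => false :: star w

/-- The index in `γ*` of the step corresponding to the step of index `i` in `γ`. -/
def starIdx (w : List Bool) (i : ℕ) : ℕ := i + (w.take i).count true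

/-- A Dyck path is rugged if every vertical step is immediately followed by a
horizontal step. -/
def Rugged (w : List Bool) : Prop :=
  ∀ i, w[i]? = some true → w[i+1]? = some false

/-- The `c`-th horizontal step of `u` (counting from `1`) lies at height at least `h`. -/
def HorizStepAbove (u : List Bool) (c h : ℕ) : Prop :=
  ∃ i < u.length, u[i]? = some false ∧
    (u.take (i+1)).count false = c ∧ h ≤ (u.take (i+1)).count true

/-- The `x`-coordinate of the vertical step of `u` from height `y` to `y + 1`, or the total
number of horizontal steps if `u` never reaches height `y + 1`. -/
def vertStepX : List Bool → ℕ → ℕ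
  | [], _ => 0
  | false :: u, y => vertStepX u y + 1
  | true :: _, 0 => 0
  | true :: u, y + 1 => vertStepX u y

lemma count_false_cons_true (u : List Bool) : (true :: u).count false = u.count false :=
  List.count_cons_of_ne (by decide)

lemma count_true_cons_false (u : List Bool) : (false :: u).count true = u.count true :=
  List.count_cons_of_ne (by decide)

lemma horizStepAbove_nil (c h : ℕ) : ¬ HorizStepAbove [] c h := by
  simp [HorizStepAbove]

lemma horizStepAbove_false_cons (u : List Bool) (c h : ℕ) :
    HorizStepAbove (false :: u) c h ↔
      (c = 1 ∧ h = 0) ∨ (0 < c ∧ HorizStepAbove u (c - 1) h) := by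
  simp only [HorizStepAbove, List.take_succ_cons, List.count_cons_self, count_true_cons_false]
  constructor
  · rintro ⟨_ | i, hi, hget, hc, hh⟩
    · simp only [List.take_zero, List.count_nil, nonpos_iff_eq_zero] at hc hh
      omega
    · simp only [List.length_cons, List.getElem?_cons_succ] at hi hget
      exact Or.inr ⟨by omega, i, by omega, hget, by omega, hh⟩
  · rintro (⟨rfl, rfl⟩ | ⟨hc, i, hi, hget, hci, hh⟩)
    · exact ⟨0, by simp, rfl, rfl, le_rfl⟩
    · exact ⟨i + 1, by simpa using hi, hget, by omega, hh⟩

lemma horizStepAbove_true_cons (u : List Bool) (c h : ℕ) :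
    HorizStepAbove (true :: u) c h ↔ HorizStepAbove u c (h - 1) := by
  simp only [HorizStepAbove, List.take_succ_cons, List.count_cons_self, count_false_cons_true]
  constructor
  · rintro ⟨_ | i, hi, hget, hc, hh⟩
    · simp at hget
    · simp only [List.length_cons, List.getElem?_cons_succ] at hi hget
      exact ⟨i, by omega, hget, hc, by omega⟩
  · rintro ⟨i, hi, hget, hc, hh⟩
    exact ⟨i + 1, by simpa using hi, hget, hc, by omega⟩

lemma horizStepAbove_zero_iff (u : List Bool) (c : ℕ) :
    HorizStepAbove u c 0 ↔ 0 < c ∧ c ≤ u.count false := by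
  induction u generalizing c with
  | nil => simp only [horizStepAbove_nil, List.count_nil, false_iff]; omega
  | cons b u ih =>
    cases b
    · rw [horizStepAbove_false_cons, ih, List.count_cons_self]; omega
    · rw [horizStepAbove_true_cons, ih, count_false_cons_true]

lemma horizStepAbove_succ_iff (u : List Bool) (c y : ℕ) :
    HorizStepAbove u c (y + 1) ↔ vertStepX u y < c ∧ c ≤ u.count false := by
  induction u generalizing c y with
  | nil => simp only [horizStepAbove_nil, List.count_nil, false_iff]; omega
  | cons b u ih =>
    cases b
    · rw [horizStepAbove_false_cons, ih, vertStepX, List.count_cons_self]; omega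
    · cases y
      · rw [horizStepAbove_true_cons, horizStepAbove_zero_iff, vertStepX, count_false_cons_true]
      · rw [horizStepAbove_true_cons, Nat.add_sub_cancel, ih, vertStepX, count_false_cons_true]

lemma star_cons_true (w : List Bool) : star (true :: w) = true :: false :: star w := rfl

lemma star_cons_false (w : List Bool) : star (false :: w) = false :: star w := rfl

lemma count_false_star (w : List Bool) :
    (star w).count false = w.count false + w.count true := by
  induction w with
  | nil => rfl
  | cons b w ih =>
    cases b <;> simp only [star_cons_false, star_cons_true, List.count_cons_self,
      count_false_cons_true, count_true_cons_false, ih] <;> omega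

lemma vertStepX_star (w : List Bool) {y : ℕ} (hy : y < w.count true) :
    vertStepX (star w) y = vertStepX w y + y := by
  induction w generalizing y with
  | nil => simp at hy
  | cons b w ih =>
    cases b
    · rw [count_true_cons_false] at hy
      rw [star_cons_false, vertStepX, vertStepX, ih hy]
      omega
    · cases y with
      | zero => rfl
      | succ y =>
        rw [List.count_cons_self] at hy
        rw [star_cons_true, vertStepX, vertStepX, vertStepX, ih (by omega)]
        omega

lemma succ_lt_of_mul_succ_le {m n x y : ℕ} (hdiag : n * (x + 1) ≤ m * y) (hy : y < n) :
    x + 1 < m := by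
  by_contra! hm
  nlinarith

lemma mem_areaSet_iff {m n : ℕ} {u : List Bool} (hf : u.count false = m) (x y : ℕ) :
    (x, y) ∈ areaSet m n u ↔ y < n ∧ n * (x + 1) ≤ m * y ∧ vertStepX u y ≤ x := by
  rw [areaSet, Finset.mem_filter, Finset.mem_product, Finset.mem_range, Finset.mem_range]
  change (x < m ∧ y < n) ∧ n * (x + 1) ≤ m * y ∧ HorizStepAbove u (x + 1) (y + 1) ↔ _
  rw [horizStepAbove_succ_iff, hf]
  constructor
  · rintro ⟨⟨-, hy⟩, hdiag, hv, -⟩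
    exact ⟨hy, hdiag, by omega⟩
  · rintro ⟨hy, hdiag, hv⟩
    have hxm := succ_lt_of_mul_succ_le hdiag hy
    exact ⟨⟨by omega, hy⟩, hdiag, by omega, by omega⟩

lemma mem_areaSet_star_iff {m n : ℕ} {w : List Bool} (hf : w.count false = m)
    (ht : w.count true = n) (x y : ℕ) :
    (x, y) ∈ areaSet (m + n) n (star w) ↔ y ≤ x ∧ (x - y, y) ∈ areaSet m n w := by
  have hf' : (star w).count false = m + n := by rw [count_false_star, hf, ht]
  rw [mem_areaSet_iff hf', mem_areaSet_iff hf]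
  constructor
  · rintro ⟨hy, hdiag, hv⟩
    rw [vertStepX_star w (ht ▸ hy)] at hv
    refine ⟨by omega, hy, ?_, by omega⟩
    obtain ⟨x, rfl⟩ : ∃ x₀, x = x₀ + y := ⟨x - y, by omega⟩
    rw [Nat.add_sub_cancel]
    nlinarith
  · rintro ⟨hyx, hy, hdiag, hv⟩
    rw [vertStepX_star w (ht ▸ hy)]
    refine ⟨hy, ?_, by omega⟩
    obtain ⟨x, rfl⟩ : ∃ x₀, x = x₀ + y := ⟨x - y, by omega⟩
    rw [Nat.add_sub_cancel] at hdiag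
    nlinarith

theorem statement10_general (m n : ℕ)
    (w : List Bool) (hw : IsDyck m n w) :
    area m n w = area (m + n) n (star w) := by
  obtain ⟨hf, ht, -⟩ := hw
  refine Finset.card_nbij' (fun p => (p.1 + p.2, p.2)) (fun p => (p.1 - p.2, p.2))
    ?_ ?_ ?_ ?_
  · rintro ⟨x, y⟩ hxy
    simpa [mem_areaSet_star_iff hf ht] using hxy
  · rintro ⟨x, y⟩ hxy
    exact ((mem_areaSet_star_iff hf ht x y).1 hxy).2
  · rintro ⟨x, y⟩ -
    simp
  · rintro ⟨x, y⟩ hxy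
    have hyx := ((mem_areaSet_star_iff hf ht x y).1 hxy).1
    simp [Nat.sub_add_cancel hyx]

/-- `area(γ) = area(γ*)`. -/
theorem statement10 (m n : ℕ) (hm : 0 < m) (hn : 0 < n) (h : Nat.Coprime m n)
    (w : List Bool) (hw : IsDyck m n w) :
    area m n w = area (m + n) n (star w) :=
  statement10_general m n w hw
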